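/- arXiv:2405.18673 — 3 statements merged into one kernel-verified Lean document; each statement's English description precedes it below -/
import Mathlib

section
/- Let Q ⊆ ℝ^d be closed convex and x ∈ Q. Define 𝒱(x) = {V(x) - n : n ∈ N_Q(x), ‖n‖² ≤ ⟨V(x), n⟩} for a fixed vector V(x) ∈ ℝ^d. Then V(x) ∈ 𝒱(x), Proj_{π_Q(x)}(V(x)) ∈ 𝒱(x), and 𝒱(x) ∩ π_Q(x) = {Proj_{π_Q(x)}(V(x))}. -/
open scoped RealInnerProductSpace

/-- The tangent cone of `Q` at `x`. -/
def tangentConeOf {d : ℕ} (Q : Set (EuclideanSpace ℝ (Fin d)))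
    (x : EuclideanSpace ℝ (Fin d)) : Set (EuclideanSpace ℝ (Fin d)) :=
  closure {v | ∃ ε > (0 : ℝ), x + ε • v ∈ Q}

/-- The normal cone of `Q` at `x`: vectors with nonpositive inner product
against all tangent vectors. -/
def normalConeOf {d : ℕ} (Q : Set (EuclideanSpace ℝ (Fin d)))
    (x : EuclideanSpace ℝ (Fin d)) : Set (EuclideanSpace ℝ (Fin d)) :=
  {n | ∀ u ∈ tangentConeOf Q x, ⟪n, u⟫ ≤ 0}

lemma tc_zero_mem {d : ℕ} {Q : Set (EuclideanSpace ℝ (Fin d))}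
    {x : EuclideanSpace ℝ (Fin d)} (hx : x ∈ Q) :
    (0 : EuclideanSpace ℝ (Fin d)) ∈ tangentConeOf Q x :=
  subset_closure ⟨1, one_pos, by simpa using hx⟩

lemma tc_convex {d : ℕ} {Q : Set (EuclideanSpace ℝ (Fin d))}
    (hconv : Convex ℝ Q) (x : EuclideanSpace ℝ (Fin d)) :
    Convex ℝ (tangentConeOf Q x) := by
  apply Convex.closure
  rintro v ⟨ε₁, hε₁, hq₁⟩ w ⟨ε₂, hε₂, hq₂⟩ a b ha hb hab
  have hD : 0 < a * ε₂ + b * ε₁ := by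
    rcases lt_or_eq_of_le ha with ha' | ha'
    · have := mul_pos ha' hε₂
      have := mul_nonneg hb hε₁.le
      linarith
    · have hb' : 0 < b := by linarith
      have := mul_pos hb' hε₁
      have := mul_nonneg ha hε₂.le
      linarith
  have hD' : a * ε₂ + b * ε₁ ≠ 0 := hD.ne'
  refine ⟨ε₁ * ε₂ / (a * ε₂ + b * ε₁), by positivity, ?_⟩
  have hlam : a * ε₂ / (a * ε₂ + b * ε₁) + b * ε₁ / (a * ε₂ + b * ε₁) = 1 := by
    field_simp
  have := hconv hq₁ hq₂
    (by positivity : (0:ℝ) ≤ a * ε₂ / (a * ε₂ + b * ε₁))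
    (by positivity : (0:ℝ) ≤ b * ε₁ / (a * ε₂ + b * ε₁)) hlam
  convert this using 1
  match_scalars <;> (field_simp; try ring)

lemma tc_smul2 {d : ℕ} {Q : Set (EuclideanSpace ℝ (Fin d))}
    {x v : EuclideanSpace ℝ (Fin d)} (hv : v ∈ tangentConeOf Q x) :
    (2 : ℝ) • v ∈ tangentConeOf Q x := by
  have hpre : ((2:ℝ) • ·) '' {v : EuclideanSpace ℝ (Fin d) | ∃ ε > (0:ℝ), x + ε • v ∈ Q}
      ⊆ {v | ∃ ε > (0:ℝ), x + ε • v ∈ Q} := by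
    rintro _ ⟨w, ⟨ε, hε, hq⟩, rfl⟩
    exact ⟨ε / 2, by positivity, by rwa [smul_smul, div_mul_cancel₀ _ (two_ne_zero)]⟩
  have hc : Continuous ((2:ℝ) • · : EuclideanSpace ℝ (Fin d) → _) :=
    continuous_const_smul _
  have := image_closure_subset_closure_image (s := {v : EuclideanSpace ℝ (Fin d) | ∃ ε > (0:ℝ), x + ε • v ∈ Q}) hc
  have h2 : (2:ℝ) • v ∈ closure (((2:ℝ) • ·) '' {v : EuclideanSpace ℝ (Fin d) | ∃ ε > (0:ℝ), x + ε • v ∈ Q}) :=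
    this ⟨v, hv, rfl⟩
  exact closure_mono hpre h2

theorem stmt_4 (d : ℕ) (Q : Set (EuclideanSpace ℝ (Fin d)))
    (hcl : IsClosed Q) (hconv : Convex ℝ Q)
    (x : EuclideanSpace ℝ (Fin d)) (hx : x ∈ Q)
    (V p : EuclideanSpace ℝ (Fin d))
    -- `p` is the metric projection of `V` onto the tangent cone
    (hpmem : p ∈ tangentConeOf Q x)
    (hpmin : ∀ u ∈ tangentConeOf Q x, ‖p - V‖ ≤ ‖u - V‖) :
    V ∈ {y | ∃ n ∈ normalConeOf Q x, ‖n‖ ^ 2 ≤ ⟪V, n⟫ ∧ y = V - n} ∧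
    p ∈ {y | ∃ n ∈ normalConeOf Q x, ‖n‖ ^ 2 ≤ ⟪V, n⟫ ∧ y = V - n} ∧
    {y | ∃ n ∈ normalConeOf Q x, ‖n‖ ^ 2 ≤ ⟪V, n⟫ ∧ y = V - n} ∩
      tangentConeOf Q x = {p} := by
  set K := tangentConeOf Q x with hK
  have hK0 : (0 : EuclideanSpace ℝ (Fin d)) ∈ K := tc_zero_mem hx
  have hKconv : Convex ℝ K := tc_convex hconv x
  -- variational inequality for p
  have hVI : ∀ u ∈ K, ⟪V - p, u - p⟫ ≤ 0 := by
    haveI : Nonempty K := ⟨⟨p, hpmem⟩⟩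
    have hinf : ‖V - p‖ = ⨅ w : K, ‖V - w‖ := by
      refine le_antisymm ?_ ?_
      · exact le_ciInf fun w => by
          simpa [norm_sub_rev] using hpmin w w.2
      · exact ciInf_le ⟨0, fun _ ⟨w, h⟩ => h ▸ norm_nonneg _⟩ (⟨p, hpmem⟩ : K)
    exact (norm_eq_iInf_iff_real_inner_le_zero hKconv hpmem).1 hinf
  have hnp : ⟪V - p, p⟫ = 0 := by
    have h1 := hVI 0 hK0
    have h2 := hVI ((2:ℝ) • p) (tc_smul2 hpmem)
    have e1 : ⟪V - p, (0:EuclideanSpace ℝ (Fin d)) - p⟫ = -⟪V - p, p⟫ := by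
      rw [zero_sub, inner_neg_right]
    have e2 : ⟪V - p, (2:ℝ) • p - p⟫ = ⟪V - p, p⟫ := by
      rw [two_smul]; rw [show p + p - p = p by abel]
    rw [e1] at h1; rw [e2] at h2
    linarith
  have hnN : V - p ∈ normalConeOf Q x := by
    intro u hu
    have := hVI u hu
    have : ⟪V - p, u⟫ = ⟪V - p, u - p⟫ + ⟪V - p, p⟫ := by
      rw [← inner_add_right]; congr 1; abel
    rw [this, hnp]; linarith [hVI u hu]
  have hnsq : ‖V - p‖ ^ 2 ≤ ⟪V, V - p⟫ := by
    have : ⟪V, V - p⟫ = ⟪V - p, V - p⟫ + ⟪p, V - p⟫ := by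
      rw [← inner_add_left]; congr 1; abel
    rw [this, real_inner_self_eq_norm_sq, real_inner_comm, hnp]
    linarith
  refine ⟨⟨0, fun u _ => by simp, by simp, by simp⟩,
    ⟨V - p, hnN, hnsq, by abel⟩, ?_⟩
  ext y
  constructor
  · rintro ⟨⟨n, hnN', hnsq', rfl⟩, hyK⟩
    -- y = V - n satisfies the variational inequality, hence equals p
    have hVIy : ∀ u ∈ K, ⟪V - (V - n), u - (V - n)⟫ ≤ 0 := by
      intro u hu
      have hny : 0 ≤ ⟪n, V - n⟫ := by
        have : ⟪n, V - n⟫ = ⟪n, V⟫ - ⟪n, n⟫ := by rw [inner_sub_right]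
        rw [this, real_inner_self_eq_norm_sq, real_inner_comm]
        linarith
      have hnu := hnN' u hu
      have : ⟪V - (V - n), u - (V - n)⟫ = ⟪n, u⟫ - ⟪n, V - n⟫ := by
        rw [show V - (V - n) = n by abel, inner_sub_right]
      rw [this]; linarith
    have h1 := hVIy p hpmem
    have h2 := hVI (V - n) hyK
    have : ‖(V - n) - p‖ ^ 2 ≤ 0 := by
      have e : ⟪(V - n) - p, (V - n) - p⟫ = ‖(V - n) - p‖ ^ 2 :=
        real_inner_self_eq_norm_sq _
      have comb : ⟪(V - n) - p, (V - n) - p⟫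
          = ⟪V - p, (V - n) - p⟫ - ⟪V - (V - n), (V - n) - p⟫ := by
        rw [← inner_sub_left]; congr 1; abel
      have h1' : ⟪V - (V - n), p - (V - n)⟫ ≤ 0 := h1
      have hneg : ⟪V - (V - n), (V - n) - p⟫ = -⟪V - (V - n), p - (V - n)⟫ := by
        rw [← inner_neg_right]; congr 1; abel
      rw [← e, comb, hneg]
      linarith
    have : (V - n) - p = 0 := by
      have hn := sq_nonneg ‖(V - n) - p‖
      have : ‖(V - n) - p‖ = 0 := by nlinarith [norm_nonneg ((V - n) - p)]
      exact norm_eq_zero.1 this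
    have : V - n = p := by
      have := sub_eq_zero.1 this; exact this
    simp [this]
  · intro hy
    rw [Set.mem_singleton_iff.mp hy]
    exact ⟨⟨V - p, hnN, hnsq, by abel⟩, hpmem⟩
end

section
/- Let Q ⊆ ℝ^d be closed convex and V : ℝ^d → ℝ^d be globally Lipschitz with constant L. If x₁, x₂ : [0,T] → Q are absolutely continuous curves with ẋᵢ(t) = Proj_{π_Q(xᵢ(t))}(V(xᵢ(t))) for a.e. t, then ‖x₁(t) - x₂(t)‖ ≤ e^{L t} ‖x₁(0) - x₂(0)‖ for all t ∈ [0,T]. -/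
/-!
Put `y = x₁ - x₂`. Since `vᵢ` is the nearest point to `V xᵢ` in the closed convex cone
`T_Q(xᵢ) ⊇ Q - xᵢ`, the vector `V xᵢ - vᵢ` lies in the normal cone of `Q` at `xᵢ`, whence
`⟪y, v₁ - v₂⟫ ≤ ⟪y, V x₁ - V x₂⟫ ≤ L ‖y‖²` almost everywhere. The fundamental theorem of calculus
for the absolutely continuous function `‖y‖²` turns this into
`‖y t‖² ≤ ‖y 0‖² + 2L ∫₀ᵗ ‖y‖²`, and Gronwall's inequality gives `‖y t‖² ≤ e^{2Lt} ‖y 0‖²`.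
-/

open MeasureTheory Set
open scoped RealInnerProductSpace Pointwise

def IsNearestPointIn {F : Type*} [NormedAddCommGroup F] (K : Set F) (v p : F) : Prop :=
  p ∈ K ∧ ∀ u ∈ K, ‖p - v‖ ≤ ‖u - v‖

theorem ConvexCone.inner_le_zero_of_isNearestPointIn {F : Type*} [NormedAddCommGroup F]
    [InnerProductSpace ℝ F] (K : ConvexCone ℝ F) {v p u : F}
    (hp : IsNearestPointIn (K : Set F) v p) (hu : u ∈ K) : ⟪v - p, u⟫ ≤ 0 := by
  have : Nonempty K := ⟨⟨p, hp.1⟩⟩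
  have hinf : ‖v - p‖ = ⨅ w : (K : Set F), ‖v - w‖ := by
    refine le_antisymm (le_ciInf fun w => ?_) (ciInf_le ⟨0, ?_⟩ (⟨p, hp.1⟩ : (K : Set F)))
    · rw [norm_sub_rev, norm_sub_rev v]
      exact hp.2 w w.2
    · rintro _ ⟨w, rfl⟩
      exact norm_nonneg _
  simpa using
    (norm_eq_iInf_iff_real_inner_le_zero K.convex hp.1).1 hinf (p + u) (K.add_mem hp.1 hu)

section TangentCone

variable {d : ℕ} {Q : Set (EuclideanSpace ℝ (Fin d))}

theorem tangentConeOf_eq_closure_hull (hQ : Convex ℝ Q) (x : EuclideanSpace ℝ (Fin d)) :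
    tangentConeOf Q x = (ConvexCone.hull ℝ (-x +ᵥ Q)).closure := by
  rw [ConvexCone.coe_closure, ConvexCone.coe_hull_of_convex (hQ.vadd (-x)), tangentConeOf]
  congr 1
  ext v
  constructor
  · rintro ⟨ε, hε, hv⟩
    refine ⟨ε⁻¹, inv_pos.2 hε, ?_⟩
    rw [mem_smul_set_iff_inv_smul_mem₀ (inv_ne_zero hε.ne'), inv_inv, mem_vadd_set_iff_neg_vadd_mem]
    simpa using hv
  · rintro ⟨r, hr, hv⟩
    refine ⟨r⁻¹, inv_pos.2 hr, ?_⟩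
    rw [mem_smul_set_iff_inv_smul_mem₀ hr.ne', mem_vadd_set_iff_neg_vadd_mem] at hv
    simpa using hv

theorem sub_mem_tangentConeOf {x y : EuclideanSpace ℝ (Fin d)} (hy : y ∈ Q) :
    y - x ∈ tangentConeOf Q x :=
  subset_closure ⟨1, one_pos, by simpa using hy⟩

theorem inner_sub_le_zero_of_isNearestPointIn_tangentConeOf (hQ : Convex ℝ Q)
    {x v p y : EuclideanSpace ℝ (Fin d)} (hp : IsNearestPointIn (tangentConeOf Q x) v p)
    (hy : y ∈ Q) : ⟪v - p, y - x⟫ ≤ 0 := by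
  rw [tangentConeOf_eq_closure_hull hQ] at hp
  refine ConvexCone.inner_le_zero_of_isNearestPointIn _ hp ?_
  rw [← SetLike.mem_coe, ← tangentConeOf_eq_closure_hull hQ]
  exact sub_mem_tangentConeOf hy

theorem inner_sub_le_of_isNearestPointIn_tangentConeOf (hQ : Convex ℝ Q)
    {a b va vb pa pb : EuclideanSpace ℝ (Fin d)} (ha : a ∈ Q) (hb : b ∈ Q)
    (hpa : IsNearestPointIn (tangentConeOf Q a) va pa)
    (hpb : IsNearestPointIn (tangentConeOf Q b) vb pb) :
    ⟪a - b, pa - pb⟫ ≤ ⟪a - b, va - vb⟫ := by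
  have hna := inner_sub_le_zero_of_isNearestPointIn_tangentConeOf hQ hpa hb
  have hnb := inner_sub_le_zero_of_isNearestPointIn_tangentConeOf hQ hpb ha
  have : ⟪a - b, va - vb⟫ - ⟪a - b, pa - pb⟫ = -⟪va - pa, b - a⟫ - ⟪vb - pb, a - b⟫ := by
    simp only [inner_sub_left, inner_sub_right, real_inner_comm]
    ring
  linarith

end TangentCone

theorem LipschitzWith.inner_sub_le {E : Type*} [NormedAddCommGroup E] [InnerProductSpace ℝ E]
    {L : NNReal} {V : E → E} (hV : LipschitzWith L V) (a b : E) :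
    ⟪a - b, V a - V b⟫ ≤ L * ‖a - b‖ ^ 2 :=
  calc ⟪a - b, V a - V b⟫ ≤ ‖a - b‖ * ‖V a - V b‖ := real_inner_le_norm _ _
    _ ≤ ‖a - b‖ * (L * ‖a - b‖) := by gcongr; exact hV.norm_sub_le a b
    _ = L * ‖a - b‖ ^ 2 := by ring

theorem IntervalIntegrable.inner_of_continuousOn {E : Type*} [NormedAddCommGroup E]
    [InnerProductSpace ℝ E] {y w : ℝ → E} {a b : ℝ} (hy : ContinuousOn y (uIcc a b))
    (hw : IntervalIntegrable w volume a b) :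
    IntervalIntegrable (fun s => ⟪y s, w s⟫) volume a b := by
  obtain ⟨C, hC⟩ := isCompact_uIcc.exists_bound_of_continuousOn hy
  refine (hw.norm.const_mul C).mono_fun'
    (((hy.mono uIoc_subset_uIcc).aestronglyMeasurable measurableSet_uIoc).inner
      hw.aestronglyMeasurable_restrict_uIoc) ?_
  filter_upwards [ae_restrict_mem measurableSet_uIoc] with s hs
  calc ‖⟪y s, w s⟫‖ ≤ ‖y s‖ * ‖w s‖ := norm_inner_le_norm _ _
    _ ≤ C * ‖w s‖ := by gcongr; exact hC s (uIoc_subset_uIcc hs)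

theorem sq_add_intervalIntegral_eq {w : ℝ → ℝ} {a b : ℝ} (hw : IntervalIntegrable w volume a b)
    (c : ℝ) :
    (c + ∫ s in a..b, w s) ^ 2 = c ^ 2 + ∫ s in a..b, 2 * ((c + ∫ r in a..s, w r) * w s) := by
  set f : ℝ → ℝ := fun t => c + ∫ s in a..t, w s
  have hf : AbsolutelyContinuousOnInterval f a b :=
    (LipschitzWith.const c).lipschitzOnWith.absolutelyContinuousOnInterval.add
      (hw.absolutelyContinuousOnInterval_intervalIntegral left_mem_uIcc)
  have hderiv : ∀ᵐ s, s ∈ uIoc a b → 2 * (f s * w s) = deriv f s * f s + f s * deriv f s := by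
    filter_upwards [hw.ae_hasDerivAt_integral] with s hs hsab
    rw [((hs (uIoc_subset_uIcc hsab) a left_mem_uIcc).const_add c).deriv]
    ring
  rw [intervalIntegral.integral_congr_ae hderiv, hf.integral_deriv_mul_eq_sub hf]
  simp only [intervalIntegral.integral_same, add_zero, f]
  ring

theorem norm_add_intervalIntegral_sq_eq {ι : Type*} [Fintype ι] {w : ℝ → EuclideanSpace ℝ ι}
    {a b : ℝ} (hw : IntervalIntegrable w volume a b) (y₀ : EuclideanSpace ℝ ι) :
    ‖y₀ + ∫ s in a..b, w s‖ ^ 2 = ‖y₀‖ ^ 2 + ∫ s in a..b, 2 * ⟪y₀ + ∫ r in a..s, w r, w s⟫ := by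
  have hwi : ∀ i, IntervalIntegrable (fun s => w s i) volume a b := fun i =>
    let π : EuclideanSpace ℝ ι →L[ℝ] ℝ := EuclideanSpace.proj i
    ⟨π.integrable_comp hw.1, π.integrable_comp hw.2⟩
  have hcoord : ∀ t ∈ uIcc a b, ∀ i, (∫ s in a..t, w s) i = ∫ s in a..t, w s i := fun t ht i =>
    ((EuclideanSpace.proj i : EuclideanSpace ℝ ι →L[ℝ] ℝ).intervalIntegral_comp_comm
      (hw.mono_set (uIcc_subset_uIcc_left ht))).symm
  have hintegrand : EqOn (fun s => 2 * ⟪y₀ + ∫ r in a..s, w r, w s⟫)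
      (fun s => ∑ i, 2 * ((y₀ i + ∫ r in a..s, w r i) * w s i)) (uIcc a b) := fun s hs => by
    simp only [PiLp.inner_apply, PiLp.add_apply, hcoord s hs, Real.inner_apply, Finset.mul_sum]
  have hsummand : ∀ i, IntervalIntegrable
      (fun s => 2 * ((y₀ i + ∫ r in a..s, w r i) * w s i)) volume a b := fun i => by
    have hprim := (hwi i).absolutelyContinuousOnInterval_intervalIntegral left_mem_uIcc
    exact ((hwi i).continuousOn_mul (continuousOn_const.add hprim.continuousOn)).const_mul 2
  rw [intervalIntegral.integral_congr hintegrand,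
    intervalIntegral.integral_finsetSum fun i _ => hsummand i,
    EuclideanSpace.norm_sq_eq, EuclideanSpace.norm_sq_eq, ← Finset.sum_add_distrib]
  refine Finset.sum_congr rfl fun i _ => ?_
  rw [Real.norm_eq_abs, sq_abs, Real.norm_eq_abs, sq_abs, PiLp.add_apply, hcoord b right_mem_uIcc]
  exact sq_add_intervalIntegral_eq (hwi i) (y₀ i)

theorem le_mul_exp_of_le_add_mul_integral {f : ℝ → ℝ} {A K T : ℝ} (hf : Continuous f)
    (hK : 0 ≤ K) (h : ∀ t ∈ Icc 0 T, f t ≤ A + K * ∫ s in (0:ℝ)..t, f s) :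
    ∀ t ∈ Icc 0 T, f t ≤ A * Real.exp (K * t) := by
  set F : ℝ → ℝ := fun t => ∫ s in (0:ℝ)..t, f s
  have hF : ∀ t, HasDerivAt F (f t) t := fun t => hf.integral_hasStrictDerivAt 0 t |>.hasDerivAt
  have hFle : ∀ t ∈ Icc 0 T, F t ≤ gronwallBound 0 K A (t - 0) :=
    le_gronwallBound_of_liminf_deriv_right_le (fun t _ => (hF t).continuousAt.continuousWithinAt)
      (fun t _ _ hr => (hF t).hasDerivWithinAt.liminf_right_slope_le hr) (by simp [F])
      (fun t ht => by linarith [h t (Ico_subset_Icc_self ht)])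
  have hexp : ∀ t, A + K * gronwallBound 0 K A t = A * Real.exp (K * t) := fun t => by
    rcases eq_or_ne K 0 with rfl | hK0
    · simp
    · rw [gronwallBound_of_K_ne_0 hK0]
      field_simp
      ring
  intro t ht
  calc f t ≤ A + K * F t := h t ht
    _ ≤ A + K * gronwallBound 0 K A t := by gcongr; simpa using hFle t ht
    _ = A * Real.exp (K * t) := hexp t

theorem norm_add_intervalIntegral_le_exp_mul {ι : Type*} [Fintype ι] {w : ℝ → EuclideanSpace ℝ ι}
    (hw : Integrable w) (y₀ : EuclideanSpace ℝ ι) {K T : ℝ} (hK : 0 ≤ K)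
    (h : ∀ᵐ s ∂volume.restrict (Icc 0 T),
      ⟪y₀ + ∫ r in (0:ℝ)..s, w r, w s⟫ ≤ K * ‖y₀ + ∫ r in (0:ℝ)..s, w r‖ ^ 2) :
    ∀ t ∈ Icc 0 T, ‖y₀ + ∫ s in (0:ℝ)..t, w s‖ ≤ Real.exp (K * t) * ‖y₀‖ := by
  set y : ℝ → EuclideanSpace ℝ ι := fun t => y₀ + ∫ s in (0:ℝ)..t, w s
  have hy : Continuous y := continuous_const.add (hw.continuous_primitive 0)
  have hsq : ∀ t ∈ Icc 0 T, ‖y t‖ ^ 2 ≤ ‖y₀‖ ^ 2 * Real.exp (2 * K * t) := by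
    refine le_mul_exp_of_le_add_mul_integral (hy.norm.pow 2) (by positivity) fun t ht => ?_
    have hmono : ∫ s in (0:ℝ)..t, 2 * ⟪y s, w s⟫ ≤ ∫ s in (0:ℝ)..t, 2 * K * ‖y s‖ ^ 2 := by
      refine intervalIntegral.integral_mono_ae_restrict ht.1
        ((hw.intervalIntegrable.inner_of_continuousOn hy.continuousOn).const_mul 2)
        ((hy.norm.pow 2).intervalIntegrable _ _ |>.const_mul _) ?_
      filter_upwards [ae_restrict_of_ae_restrict_of_subset (Icc_subset_Icc_right ht.2) h] with s hs
      linarith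
    calc ‖y t‖ ^ 2 = ‖y₀‖ ^ 2 + ∫ s in (0:ℝ)..t, 2 * ⟪y s, w s⟫ :=
          norm_add_intervalIntegral_sq_eq hw.intervalIntegrable y₀
      _ ≤ ‖y₀‖ ^ 2 + ∫ s in (0:ℝ)..t, 2 * K * ‖y s‖ ^ 2 := by gcongr
      _ = ‖y₀‖ ^ 2 + 2 * K * ∫ s in (0:ℝ)..t, ‖y s‖ ^ 2 := by
          rw [intervalIntegral.integral_const_mul]
  intro t ht
  refine le_of_sq_le_sq ((hsq t ht).trans_eq ?_) (by positivity)
  rw [mul_pow, ← Real.exp_nat_mul]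
  ring_nf

theorem stmt_5_general (d : ℕ) (Q : Set (EuclideanSpace ℝ (Fin d)))
    (hconv : Convex ℝ Q)
    (T : ℝ) (L : NNReal)
    (V : EuclideanSpace ℝ (Fin d) → EuclideanSpace ℝ (Fin d))
    (hV : LipschitzWith L V)
    (x₁ x₂ v₁ v₂ : ℝ → EuclideanSpace ℝ (Fin d))
    (hmem₁ : ∀ t ∈ Set.Icc 0 T, x₁ t ∈ Q)
    (hmem₂ : ∀ t ∈ Set.Icc 0 T, x₂ t ∈ Q)
    -- absolute continuity: the curves are integrals of their a.e. derivatives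
    (hv₁int : IntegrableOn v₁ (Set.Icc 0 T))
    (hv₂int : IntegrableOn v₂ (Set.Icc 0 T))
    (hAC₁ : ∀ t ∈ Set.Icc 0 T, x₁ t = x₁ 0 + ∫ s in (0:ℝ)..t, v₁ s)
    (hAC₂ : ∀ t ∈ Set.Icc 0 T, x₂ t = x₂ 0 + ∫ s in (0:ℝ)..t, v₂ s)
    -- a.e. on [0,T], the derivative is the projection of `V ∘ xᵢ` onto the tangent cone
    (hproj₁ : ∀ᵐ t ∂(volume.restrict (Set.Icc 0 T)),
      v₁ t ∈ tangentConeOf Q (x₁ t) ∧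
      ∀ u ∈ tangentConeOf Q (x₁ t), ‖v₁ t - V (x₁ t)‖ ≤ ‖u - V (x₁ t)‖)
    (hproj₂ : ∀ᵐ t ∂(volume.restrict (Set.Icc 0 T)),
      v₂ t ∈ tangentConeOf Q (x₂ t) ∧
      ∀ u ∈ tangentConeOf Q (x₂ t), ‖v₂ t - V (x₂ t)‖ ≤ ‖u - V (x₂ t)‖) :
    ∀ t ∈ Set.Icc 0 T, ‖x₁ t - x₂ t‖ ≤ Real.exp (L * t) * ‖x₁ 0 - x₂ 0‖ := by
  -- extended by zero outside `[0, T]`, so that its primitive is continuous on all of `ℝ`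
  set w := (Icc 0 T).indicator fun s => v₁ s - v₂ s
  have hw : Integrable w := (hv₁int.sub hv₂int).integrable_indicator measurableSet_Icc
  have hx : ∀ s ∈ Icc 0 T, x₁ s - x₂ s = x₁ 0 - x₂ 0 + ∫ r in (0:ℝ)..s, w r := fun s hs => by
    have hsub : uIcc 0 s ⊆ Icc 0 T := by
      rw [uIcc_of_le hs.1]
      exact Icc_subset_Icc_right hs.2
    rw [intervalIntegral.integral_congr fun r hr => indicator_of_mem (hsub hr) _,
      intervalIntegral.integral_sub (hv₁int.mono_set hsub).intervalIntegrable
        (hv₂int.mono_set hsub).intervalIntegrable, hAC₁ s hs, hAC₂ s hs]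
    abel
  intro t ht
  rw [hx t ht]
  refine norm_add_intervalIntegral_le_exp_mul hw _ L.2 ?_ t ht
  filter_upwards [hproj₁, hproj₂, ae_restrict_mem measurableSet_Icc] with s h₁ h₂ hs
  rw [← hx s hs, show w s = v₁ s - v₂ s from indicator_of_mem hs _]
  exact (inner_sub_le_of_isNearestPointIn_tangentConeOf hconv (hmem₁ s hs) (hmem₂ s hs) h₁ h₂).trans
    (hV.inner_sub_le _ _)

theorem stmt_5 (d : ℕ) (Q : Set (EuclideanSpace ℝ (Fin d)))
    (hcl : IsClosed Q) (hconv : Convex ℝ Q)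
    (T : ℝ) (hT : 0 ≤ T) (L : NNReal)
    (V : EuclideanSpace ℝ (Fin d) → EuclideanSpace ℝ (Fin d))
    (hV : LipschitzWith L V)
    (x₁ x₂ v₁ v₂ : ℝ → EuclideanSpace ℝ (Fin d))
    (hmem₁ : ∀ t ∈ Set.Icc 0 T, x₁ t ∈ Q)
    (hmem₂ : ∀ t ∈ Set.Icc 0 T, x₂ t ∈ Q)
    -- absolute continuity: the curves are integrals of their a.e. derivatives
    (hv₁int : IntegrableOn v₁ (Set.Icc 0 T))
    (hv₂int : IntegrableOn v₂ (Set.Icc 0 T))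
    (hAC₁ : ∀ t ∈ Set.Icc 0 T, x₁ t = x₁ 0 + ∫ s in (0:ℝ)..t, v₁ s)
    (hAC₂ : ∀ t ∈ Set.Icc 0 T, x₂ t = x₂ 0 + ∫ s in (0:ℝ)..t, v₂ s)
    -- a.e. on [0,T], the derivative is the projection of `V ∘ xᵢ` onto the tangent cone
    (hproj₁ : ∀ᵐ t ∂(volume.restrict (Set.Icc 0 T)),
      v₁ t ∈ tangentConeOf Q (x₁ t) ∧
      ∀ u ∈ tangentConeOf Q (x₁ t), ‖v₁ t - V (x₁ t)‖ ≤ ‖u - V (x₁ t)‖)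
    (hproj₂ : ∀ᵐ t ∂(volume.restrict (Set.Icc 0 T)),
      v₂ t ∈ tangentConeOf Q (x₂ t) ∧
      ∀ u ∈ tangentConeOf Q (x₂ t), ‖v₂ t - V (x₂ t)‖ ≤ ‖u - V (x₂ t)‖) :
    ∀ t ∈ Set.Icc 0 T, ‖x₁ t - x₂ t‖ ≤ Real.exp (L * t) * ‖x₁ 0 - x₂ 0‖ :=
  stmt_5_general d Q hconv T L V hV x₁ x₂ v₁ v₂ hmem₁ hmem₂ hv₁int hv₂int hAC₁ hAC₂ hproj₁ hproj₂
end

section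
/- Let Q ⊆ ℝ^d be closed convex, x₁, x₂ ∈ Q, and v₁, v₂ ∈ ℝ^d. Then ⟨x₁ - x₂, Proj_{π_Q(x₁)}(v₁) - Proj_{π_Q(x₂)}(v₂)⟩ ≤ ⟨x₁ - x₂, v₁ - v₂⟩. -/
open scoped RealInnerProductSpace

section aux
variable {d : ℕ} {Q : Set (EuclideanSpace ℝ (Fin d))} {x : EuclideanSpace ℝ (Fin d)}

lemma preTangent_convex (hconv : Convex ℝ Q) :
    Convex ℝ {v : EuclideanSpace ℝ (Fin d) | ∃ ε > (0 : ℝ), x + ε • v ∈ Q} := by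
  rintro v ⟨ε, hε, hv⟩ w ⟨δ, hδ, hw⟩ a b ha hb hab
  rcases eq_or_lt_of_le ha with ha0 | ha0
  · refine ⟨δ, hδ, ?_⟩
    have hb1 : b = 1 := by linarith
    rw [← ha0, hb1]; simpa using hw
  rcases eq_or_lt_of_le hb with hb0 | hb0
  · refine ⟨ε, hε, ?_⟩
    have ha1 : a = 1 := by linarith
    rw [← hb0, ha1]; simpa using hv
  have hDpos : 0 < a / ε + b / δ := by positivity
  refine ⟨1 / (a / ε + b / δ), by positivity, ?_⟩
  have hθ0 : 0 ≤ a / ε / (a / ε + b / δ) := by positivity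
  have hθ1 : a / ε / (a / ε + b / δ) ≤ 1 := by
    rw [div_le_one hDpos]; linarith [div_nonneg hb hδ.le]
  have key : x + (1 / (a / ε + b / δ)) • (a • v + b • w)
      = (a / ε / (a / ε + b / δ)) • (x + ε • v)
        + (1 - a / ε / (a / ε + b / δ)) • (x + δ • w) := by
    match_scalars <;> field_simp <;> ring
  rw [key]
  exact hconv hv hw hθ0 (by linarith) (by ring)

lemma preTangent_smul (hx : x ∈ Q) {c : ℝ} (hc : 0 < c)
    {v : EuclideanSpace ℝ (Fin d)}
    (hv : v ∈ {v : EuclideanSpace ℝ (Fin d) | ∃ ε > (0 : ℝ), x + ε • v ∈ Q}) :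
    c • v ∈ {v : EuclideanSpace ℝ (Fin d) | ∃ ε > (0 : ℝ), x + ε • v ∈ Q} := by
  obtain ⟨ε, hε, hεv⟩ := hv
  refine ⟨ε / c, by positivity, ?_⟩
  rw [smul_smul, div_mul_cancel₀ _ hc.ne']
  exact hεv

lemma tangent_smul (hx : x ∈ Q) {c : ℝ} (hc : 0 < c)
    {v : EuclideanSpace ℝ (Fin d)} (hv : v ∈ tangentConeOf Q x) :
    c • v ∈ tangentConeOf Q x := by
  have : Continuous fun y : EuclideanSpace ℝ (Fin d) => c • y := continuous_const_smul c
  exact map_mem_closure this hv fun y hy => preTangent_smul hx hc hy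

/-- normal cone property -/
lemma normal_cone_prop (hconv : Convex ℝ Q) (hx : x ∈ Q)
    (v p : EuclideanSpace ℝ (Fin d)) (hpmem : p ∈ tangentConeOf Q x)
    (hpmin : ∀ u ∈ tangentConeOf Q x, ‖p - v‖ ≤ ‖u - v‖)
    {q : EuclideanSpace ℝ (Fin d)} (hq : q ∈ Q) : ⟪v - p, q - x⟫ ≤ 0 := by
  set K := tangentConeOf Q x with hK
  have hKconv : Convex ℝ K := (preTangent_convex hconv).closure
  -- variational inequality
  haveI : Nonempty K := ⟨⟨p, hpmem⟩⟩
  have hbdd : BddBelow (Set.range fun w : K => ‖v - (w : EuclideanSpace ℝ (Fin d))‖) := by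
    refine ⟨0, ?_⟩
    rintro r ⟨z, rfl⟩
    exact norm_nonneg _
  have hiInf : ‖v - p‖ = ⨅ w : K, ‖v - w‖ := by
    refine le_antisymm (le_ciInf fun w => ?_) (ciInf_le hbdd ⟨p, hpmem⟩)
    rw [norm_sub_rev, norm_sub_rev v]
    exact hpmin w w.2
  have hvar : ∀ w ∈ K, ⟪v - p, w - p⟫ ≤ 0 :=
    (norm_eq_iInf_iff_real_inner_le_zero hKconv hpmem).mp hiInf
  -- q - x ∈ K
  have hqx : q - x ∈ K := by
    apply subset_closure
    refine ⟨1, one_pos, ?_⟩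
    simpa using hq
  -- p + (q - x) ∈ K
  have hsum : p + (q - x) ∈ K := by
    have hmid : (1/2 : ℝ) • p + (1/2 : ℝ) • (q - x) ∈ K :=
      hKconv hpmem hqx (by norm_num) (by norm_num) (by norm_num)
    have := tangent_smul hx (c := 2) two_pos hmid
    rw [smul_add, smul_smul, smul_smul] at this
    norm_num at this
    exact this
  have := hvar _ hsum
  simpa using this

end aux

theorem stmt_6 (d : ℕ) (Q : Set (EuclideanSpace ℝ (Fin d)))
    (hcl : IsClosed Q) (hconv : Convex ℝ Q)
    (x₁ x₂ : EuclideanSpace ℝ (Fin d)) (hx₁ : x₁ ∈ Q) (hx₂ : x₂ ∈ Q)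
    (v₁ v₂ p₁ p₂ : EuclideanSpace ℝ (Fin d))
    -- `p₁` is the metric projection of `v₁` onto the tangent cone at `x₁`
    (hp₁mem : p₁ ∈ tangentConeOf Q x₁)
    (hp₁min : ∀ u ∈ tangentConeOf Q x₁, ‖p₁ - v₁‖ ≤ ‖u - v₁‖)
    -- `p₂` is the metric projection of `v₂` onto the tangent cone at `x₂`
    (hp₂mem : p₂ ∈ tangentConeOf Q x₂)
    (hp₂min : ∀ u ∈ tangentConeOf Q x₂, ‖p₂ - v₂‖ ≤ ‖u - v₂‖) :
    ⟪x₁ - x₂, p₁ - p₂⟫ ≤ ⟪x₁ - x₂, v₁ - v₂⟫ := by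
  have h1 : ⟪v₁ - p₁, x₂ - x₁⟫ ≤ 0 := normal_cone_prop hconv hx₁ v₁ p₁ hp₁mem hp₁min hx₂
  have h2 : ⟪v₂ - p₂, x₁ - x₂⟫ ≤ 0 := normal_cone_prop hconv hx₂ v₂ p₂ hp₂mem hp₂min hx₁
  have h1' : 0 ≤ ⟪x₁ - x₂, v₁ - p₁⟫ := by
    rw [show x₂ - x₁ = -(x₁ - x₂) by abel, inner_neg_right] at h1
    rw [real_inner_comm]; linarith
  have h2' : ⟪x₁ - x₂, v₂ - p₂⟫ ≤ 0 := by rw [real_inner_comm]; exact h2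
  have key : ⟪x₁ - x₂, v₁ - v₂⟫ - ⟪x₁ - x₂, p₁ - p₂⟫
      = ⟪x₁ - x₂, v₁ - p₁⟫ - ⟪x₁ - x₂, v₂ - p₂⟫ := by
    simp only [inner_sub_right]; ring
  linarith
end
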